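/- arXiv:2310.19780 — 4 statements merged into one kernel-verified Lean document; each statement's English description precedes it below -/
import Mathlib

section
/- Let Ψ₂ : (0,∞) → ℝ be a smooth function decaying at infinity solving α² (z∂_z)² Ψ₂ + 4α (z∂_z) Ψ₂ = F₂ with 0 ≤ α ≤ 2, where F₂ ∈ L²((0,∞), dz). Then α ‖z∂_z Ψ₂‖_{L²} + α² ‖(z∂_z)² Ψ₂‖_{L²} ≤ 4 ‖F₂‖_{L²}. -/
open Real Set MeasureTheory Filter Topology

private lemma abs_mul_le_sq_add_sq' (a b : ℝ) : ‖a * b‖ ≤ a^2 + b^2 := by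
  rw [Real.norm_eq_abs, abs_mul]
  nlinarith [sq_abs a, sq_abs b, abs_nonneg a, abs_nonneg b, sq_nonneg (|a| - |b|)]

private lemma not_int_tail {c R : ℝ} (hc : 0 < c) (hR : 0 < R) {f : ℝ → ℝ}
    (hf : IntegrableOn f (Ioi R)) (hb : ∀ z ∈ Ioi R, c / z ≤ f z) : False := by
  have h1 : IntegrableOn (fun z : ℝ => c * z⁻¹) (Ioi R) := by
    refine hf.mono' ((measurable_inv.const_mul c).aestronglyMeasurable) ?_
    filter_upwards [ae_restrict_mem measurableSet_Ioi] with z hz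
    have hz0 : 0 < z := hR.trans hz
    rw [Real.norm_eq_abs, abs_of_nonneg (by positivity), ← div_eq_mul_inv]
    exact hb z hz
  have h2 : IntegrableOn (fun z : ℝ => z⁻¹) (Ioi R) := by
    have := h1.const_mul c⁻¹
    simpa [← mul_assoc, inv_mul_cancel₀ hc.ne', IntegrableOn] using this
  have h3 : IntegrableOn (fun z : ℝ => z ^ (-1 : ℝ)) (Ioi R) := by
    refine h2.congr_fun (fun z hz => ?_) measurableSet_Ioi
    rw [show (-1 : ℝ) = ((-1 : ℤ) : ℝ) by norm_num, Real.rpow_intCast, zpow_neg_one]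
  rw [integrableOn_Ioi_rpow_iff hR] at h3
  linarith

private lemma not_int_zero {c t : ℝ} (hc : 0 < c) (ht : 0 < t) {f : ℝ → ℝ}
    (hf : IntegrableOn f (Ioo 0 t)) (hb : ∀ z ∈ Ioo (0:ℝ) t, c / z ≤ f z) : False := by
  have h1 : IntegrableOn (fun z : ℝ => c * z⁻¹) (Ioo 0 t) := by
    refine hf.mono' ((measurable_inv.const_mul c).aestronglyMeasurable) ?_
    filter_upwards [ae_restrict_mem measurableSet_Ioo] with z hz
    have hz0 : 0 < z := hz.1
    rw [Real.norm_eq_abs, abs_of_nonneg (by positivity), ← div_eq_mul_inv]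
    exact hb z hz
  have h2 : IntegrableOn (fun z : ℝ => z⁻¹) (Ioo 0 t) := by
    have := h1.const_mul c⁻¹
    simpa [← mul_assoc, inv_mul_cancel₀ hc.ne', IntegrableOn] using this
  have h3 : IntegrableOn (fun z : ℝ => z ^ (-1 : ℝ)) (Ioo 0 t) := by
    refine h2.congr_fun (fun z hz => ?_) measurableSet_Ioo
    rw [show (-1 : ℝ) = ((-1 : ℤ) : ℝ) by norm_num, Real.rpow_intCast, zpow_neg_one]
  rw [intervalIntegral.integrableOn_Ioo_rpow_iff ht] at h3
  linarith

private lemma key_ibp (g : ℝ → ℝ) (hg : ContDiffOn ℝ (⊤ : ℕ∞) g (Ioi 0))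
    (hI1 : IntegrableOn (fun z => (g z)^2) (Ioi 0))
    (hI2 : IntegrableOn (fun z => (z * deriv g z)^2) (Ioi 0)) :
    ∫ z in Ioi (0:ℝ), ((g z)^2 + 2 * (g z * (z * deriv g z))) = 0 := by
  set φ : ℝ → ℝ := fun z => (g z)^2 + 2 * (g z * (z * deriv g z)) with hφdef
  set h : ℝ → ℝ := fun z => z * (g z)^2 with hhdef
  have hgd : ∀ z ∈ Ioi (0:ℝ), HasDerivAt g (deriv g z) z := fun z hz =>
    ((hg.differentiableOn (by simp)).differentiableAt (isOpen_Ioi.mem_nhds hz)).hasDerivAt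
  have hg'c : ContinuousOn (deriv g) (Ioi 0) :=
    (hg.deriv_of_isOpen isOpen_Ioi (m := (⊤ : ℕ∞)) (by simp)).continuousOn
  have hGc : ContinuousOn (fun z => z * deriv g z) (Ioi 0) := continuousOn_id.mul hg'c
  have hgc : ContinuousOn g (Ioi 0) := hg.continuousOn
  have hgG : IntegrableOn (fun z => g z * (z * deriv g z)) (Ioi 0) := by
    refine (hI1.add hI2).mono'
      ((hgc.mul hGc).aestronglyMeasurable measurableSet_Ioi) ?_
    filter_upwards [ae_restrict_mem measurableSet_Ioi] with z _
    exact abs_mul_le_sq_add_sq' _ _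
  have hφi : IntegrableOn φ (Ioi 0) := hI1.add (hgG.const_mul 2)
  have hhd : ∀ z ∈ Ioi (0:ℝ), HasDerivAt h (φ z) z := by
    intro z hz
    have : HasDerivAt (fun y => y * g y ^ 2) (1 * g z ^ 2 + z * (((2:ℕ):ℝ) * g z ^ (2 - 1) * deriv g z)) z :=
      (hasDerivAt_id' z).mul ((hgd z hz).pow 2)
    convert this using 1
    simp [hφdef]
    ring
  -- FTC on compact subintervals
  have hFTC : ∀ a b : ℝ, 0 < a → a ≤ b → ∫ x in a..b, φ x = h b - h a := by
    intro a b ha hab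
    refine intervalIntegral.integral_eq_sub_of_hasDerivAt (fun x hx => ?_) ?_
    · rw [uIcc_of_le hab] at hx
      exact hhd x (lt_of_lt_of_le ha hx.1)
    · rw [intervalIntegrable_iff_integrableOn_Ioc_of_le hab]
      exact hφi.mono_set (fun x hx => ha.trans hx.1)
  -- limit at infinity
  have hTop : Tendsto h atTop (𝓝 (h 1 + ∫ z in Ioi 1, φ z)) := by
    have t1 := intervalIntegral_tendsto_integral_Ioi 1
      (hφi.mono_set (Ioi_subset_Ioi zero_le_one)) tendsto_id
    simp only [id_eq] at t1
    refine Tendsto.congr' ?_ (tendsto_const_nhds.add t1)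
    filter_upwards [eventually_ge_atTop 1] with x hx
    rw [hFTC 1 x one_pos hx]; ring
  -- limit at zero
  have hPsub : Tendsto (fun x => ∫ t in x..(1:ℝ), φ t) (𝓝[>] 0)
      (𝓝 (∫ z in Ioc (0:ℝ) 1, φ z)) := by
    have h_int : IntegrableOn φ (uIcc (0:ℝ) 1) := by
      rw [uIcc_of_le zero_le_one, integrableOn_Icc_iff_integrableOn_Ioc]
      exact hφi.mono_set Ioc_subset_Ioi_self
    have hc := intervalIntegral.continuousOn_primitive_interval_left h_int 0 left_mem_uIcc
    rw [ContinuousWithinAt] at hc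
    rw [intervalIntegral.integral_of_le zero_le_one] at hc
    refine hc.mono_left ?_
    rw [uIcc_of_le zero_le_one, ← nhdsWithin_Ioc_eq_nhdsGT zero_lt_one]
    exact nhdsWithin_mono _ Ioc_subset_Icc_self
  have hZero : Tendsto h (𝓝[>] (0:ℝ)) (𝓝 (h 1 - ∫ z in Ioc (0:ℝ) 1, φ z)) := by
    refine Tendsto.congr' ?_ (tendsto_const_nhds.sub hPsub)
    have hm : Ioo (0:ℝ) 1 ∈ 𝓝[>] (0:ℝ) := Ioo_mem_nhdsGT_of_mem ⟨le_refl 0, zero_lt_one⟩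
    filter_upwards [hm] with a ha
    rw [hFTC a 1 ha.1 ha.2.le]; ring
  -- the limit at infinity is zero
  have hLt : h 1 + ∫ z in Ioi 1, φ z = 0 := by
    set Lt := h 1 + ∫ z in Ioi 1, φ z with hLtdef
    have hnn : ∀ᶠ x in atTop, 0 ≤ h x := by
      filter_upwards [eventually_gt_atTop 0] with x hx
      exact mul_nonneg hx.le (sq_nonneg _)
    have hge : 0 ≤ Lt := ge_of_tendsto hTop hnn
    rcases hge.lt_or_eq with hpos | heq
    · exfalso
      have hev := hTop.eventually (eventually_gt_nhds (show Lt/2 < Lt by linarith))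
      obtain ⟨R, hR⟩ := eventually_atTop.mp hev
      have hR' : (0:ℝ) < max R 1 := lt_of_lt_of_le one_pos (le_max_right _ _)
      refine not_int_tail (half_pos hpos) hR'
        (hI1.mono_set (Ioi_subset_Ioi hR'.le)) (fun z hz => ?_)
      have hz0 : 0 < z := hR'.trans hz
      have h2 : Lt/2 < z * g z ^ 2 := hR z (((le_max_left R 1).trans_lt hz).le)
      rw [div_le_iff₀ hz0]
      linarith [h2, mul_comm z (g z ^ 2)]
    · exact heq.symm
  -- the limit at zero is zero
  have hL0 : h 1 - ∫ z in Ioc (0:ℝ) 1, φ z = 0 := by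
    set L0 := h 1 - ∫ z in Ioc (0:ℝ) 1, φ z with hL0def
    have hnn : ∀ᶠ x in 𝓝[>] (0:ℝ), 0 ≤ h x := by
      filter_upwards [self_mem_nhdsWithin] with x hx
      exact mul_nonneg (le_of_lt hx) (sq_nonneg _)
    have hge : 0 ≤ L0 := ge_of_tendsto hZero hnn
    rcases hge.lt_or_eq with hpos | heq
    · exfalso
      have hev := hZero.eventually (eventually_gt_nhds (show L0/2 < L0 by linarith))
      obtain ⟨u, hu, hsub⟩ := mem_nhdsGT_iff_exists_Ioo_subset.mp hev
      refine not_int_zero (half_pos hpos) hu (hI1.mono_set Ioo_subset_Ioi_self)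
        (fun z hz => ?_)
      have h2 : L0/2 < z * g z ^ 2 := hsub hz
      have hz0 : 0 < z := hz.1
      rw [div_le_iff₀ hz0]
      linarith [h2, mul_comm z (g z ^ 2)]
    · exact heq.symm
  -- combine
  have hsplit : ∫ z in Ioi (0:ℝ), φ z
      = (∫ z in Ioc (0:ℝ) 1, φ z) + ∫ z in Ioi (1:ℝ), φ z := by
    rw [← Ioc_union_Ioi_eq_Ioi zero_le_one]
    rw [setIntegral_union (Ioc_disjoint_Ioi le_rfl) measurableSet_Ioi
      (hφi.mono_set Ioc_subset_Ioi_self) (hφi.mono_set (Ioi_subset_Ioi zero_le_one))]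
  show ∫ z in Ioi (0:ℝ), φ z = 0
  rw [hsplit]; linarith

set_option maxHeartbeats 1000000

/-- Basic estimate for the second-shell Biot–Savart ODE: if `Ψ₂` is smooth on `(0,∞)`,
decays at infinity, and solves `α² (z∂_z)² Ψ₂ + 4α (z∂_z) Ψ₂ = F₂` with `0 ≤ α ≤ 2` and
`F₂ ∈ L²`, then `α ‖z∂_z Ψ₂‖_{L²} + α² ‖(z∂_z)² Ψ₂‖_{L²} ≤ 4 ‖F₂‖_{L²}`. -/
theorem stmt2 (α : ℝ) (hα0 : 0 ≤ α) (hα2 : α ≤ 2) (Ψ F : ℝ → ℝ)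
    (hΨ : ContDiffOn ℝ (⊤ : ℕ∞) Ψ (Ioi 0))
    (hdecay : Filter.Tendsto Ψ Filter.atTop (nhds 0))
    (hdecay' : Filter.Tendsto (fun z => z * deriv Ψ z) Filter.atTop (nhds 0))
    (hF : IntegrableOn (fun z => (F z)^2) (Ioi 0))
    (hD1 : IntegrableOn (fun z => (z * deriv Ψ z)^2) (Ioi 0))
    (hD2 : IntegrableOn (fun z => (z * deriv (fun w => w * deriv Ψ w) z)^2) (Ioi 0))
    (heq : ∀ z ∈ Ioi (0:ℝ),
      α^2 * (z * deriv (fun w => w * deriv Ψ w) z) + 4 * α * (z * deriv Ψ z) = F z) :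
    α * Real.sqrt (∫ z in Ioi (0:ℝ), (z * deriv Ψ z)^2)
      + α^2 * Real.sqrt (∫ z in Ioi (0:ℝ), (z * deriv (fun w => w * deriv Ψ w) z)^2)
      ≤ 4 * Real.sqrt (∫ z in Ioi (0:ℝ), (F z)^2) := by
  set g : ℝ → ℝ := fun z => z * deriv Ψ z with hgdef
  have hΨ' := hΨ.deriv_of_isOpen isOpen_Ioi (m := (⊤ : ℕ∞)) (by simp)
  have hgsm : ContDiffOn ℝ (⊤ : ℕ∞) g (Ioi 0) := contDiffOn_id.mul hΨ'
  have hD1' : IntegrableOn (fun z => (g z)^2) (Ioi 0) := hD1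
  have hD2' : IntegrableOn (fun z => (z * deriv g z)^2) (Ioi 0) := hD2
  have hkey := key_ibp g hgsm hD1' hD2'
  have hg'c : ContinuousOn (deriv g) (Ioi 0) :=
    (hgsm.deriv_of_isOpen isOpen_Ioi (m := (⊤ : ℕ∞)) (by simp)).continuousOn
  have hGc : ContinuousOn (fun z => z * deriv g z) (Ioi 0) := continuousOn_id.mul hg'c
  have hgG : IntegrableOn (fun z => g z * (z * deriv g z)) (Ioi 0) := by
    refine (hD1'.add hD2').mono'
      ((hgsm.continuousOn.mul hGc).aestronglyMeasurable measurableSet_Ioi) ?_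
    filter_upwards [ae_restrict_mem measurableSet_Ioi] with z _
    exact abs_mul_le_sq_add_sq' _ _
  set I1 := ∫ z in Ioi (0:ℝ), (g z)^2 with hI1def
  set I2 := ∫ z in Ioi (0:ℝ), (z * deriv g z)^2 with hI2def
  set J := ∫ z in Ioi (0:ℝ), g z * (z * deriv g z) with hJdef
  have hJ : I1 + 2 * J = 0 := by
    rw [hI1def, hJdef, ← integral_const_mul, ← integral_add hD1' (hgG.const_mul 2)]
    exact hkey
  have hFsq : EqOn (fun z => (F z)^2)
      (fun z => α^4 * (z * deriv g z)^2
        + (8*α^3*(g z * (z * deriv g z)) + 16*α^2*(g z)^2)) (Ioi 0) := by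
    intro z hz
    simp only
    rw [← heq z hz]
    ring
  have hint1 : IntegrableOn (fun z => α^4 * (z * deriv g z)^2) (Ioi 0) := hD2'.const_mul _
  have hint2 : IntegrableOn (fun z => 8*α^3*(g z * (z * deriv g z))) (Ioi 0) := hgG.const_mul _
  have hint3 : IntegrableOn (fun z => 16*α^2*(g z)^2) (Ioi 0) := hD1'.const_mul _
  have hint23 : IntegrableOn
      (fun z => 8*α^3*(g z * (z * deriv g z)) + 16*α^2*(g z)^2) (Ioi 0) := hint2.add hint3
  have hIF : (∫ z in Ioi (0:ℝ), (F z)^2) = α^4 * I2 + (8*α^3*J + 16*α^2*I1) := by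
    rw [setIntegral_congr_fun measurableSet_Ioi hFsq]
    rw [integral_add hint1 hint23, integral_add hint2 hint3,
      integral_const_mul, integral_const_mul, integral_const_mul]
  have hI1nn : 0 ≤ I1 := setIntegral_nonneg measurableSet_Ioi (fun z _ => sq_nonneg _)
  have hI2nn : 0 ≤ I2 := setIntegral_nonneg measurableSet_Ioi (fun z _ => sq_nonneg _)
  have hIFnn : 0 ≤ ∫ z in Ioi (0:ℝ), (F z)^2 :=
    setIntegral_nonneg measurableSet_Ioi (fun z _ => sq_nonneg _)
  set A := Real.sqrt I1 with hAdef
  set B := Real.sqrt I2 with hBdef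
  set C := Real.sqrt (∫ z in Ioi (0:ℝ), (F z)^2) with hCdef
  have hA : A^2 = I1 := Real.sq_sqrt hI1nn
  have hB : B^2 = I2 := Real.sq_sqrt hI2nn
  have hC : C^2 = α^4 * I2 + (8*α^3*J + 16*α^2*I1) := by
    rw [hCdef, Real.sq_sqrt hIFnn, hIF]
  have hAnn : 0 ≤ A := Real.sqrt_nonneg _
  have hBnn : 0 ≤ B := Real.sqrt_nonneg _
  have hCnn : 0 ≤ C := Real.sqrt_nonneg _
  have hJ' : J = -(A^2)/2 := by rw [hA]; linarith
  have hC2 : C^2 = α^4 * B^2 + (16*α^2 - 4*α^3) * A^2 := by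
    rw [hC, hJ', hA, hB]; ring
  have hsq : (α * A + α^2 * B)^2 ≤ (4 * C)^2 := by
    nlinarith [sq_nonneg (α * A - α^2 * B), hC2,
      sq_nonneg (α * A), sq_nonneg (α^2 * B),
      mul_nonneg (sub_nonneg.mpr hα2) (sq_nonneg (α * A))]
  have hpos : 0 ≤ α * A + α^2 * B := by positivity
  calc α * A + α^2 * B = Real.sqrt ((α * A + α^2 * B)^2) := (Real.sqrt_sq hpos).symm
    _ ≤ Real.sqrt ((4 * C)^2) := Real.sqrt_le_sqrt hsq
    _ = 4 * C := Real.sqrt_sq (by positivity)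
end

section
/- Let w : (0,∞) → (0,∞) be smooth with lim_{z→0} z³ w(z) = 0 and |∂_z(z w(z))| ≤ C₁ w(z) for all z. Then there exists α* > 0 depending only on C₁ and a constant C₂ such that any smooth decaying solution Ψ₂ of α² D_z² Ψ₂ + 4α D_z Ψ₂ = F₂ with 0 ≤ α ≤ α* satisfies α ‖D_z Ψ₂‖_{L²_w} + α² ‖D_z² Ψ₂‖_{L²_w} ≤ C₂ ‖F₂‖_{L²_w}. -/
open Real Set MeasureTheory

open Filter

set_option maxHeartbeats 1000000


lemma limit_zero_atTop {φ : ℝ → ℝ} {L M : ℝ} (hM : 0 < M)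
    (hint : IntegrableOn φ (Ioi M)) (hpos : ∀ z ∈ Ioi M, 0 ≤ φ z)
    (hlim : Tendsto (fun z => z * φ z) atTop (nhds L)) : L = 0 := by
  have hL0 : 0 ≤ L := by
    refine ge_of_tendsto hlim ?_
    filter_upwards [eventually_ge_atTop (M + 1)] with z hz
    have hz1 : M < z := by linarith
    exact mul_nonneg (by linarith) (hpos z hz1)
  rcases hL0.eq_or_lt with h | hL
  · exact h.symm
  exfalso
  have hev : ∀ᶠ z in atTop, L / 2 < z * φ z :=
    hlim.eventually (eventually_gt_nhds (by linarith))
  rcases (hev.and (eventually_ge_atTop (M + 1))).exists_forall_of_atTop with ⟨N, hN⟩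
  set N' : ℝ := max N (M + 1) with hN'
  have hN'pos : 0 < N' := lt_of_lt_of_le (by linarith) (le_max_right _ _)
  have hsub : Ioi N' ⊆ Ioi M := Ioi_subset_Ioi (le_trans (by linarith) (le_max_right _ _))
  have hint' : IntegrableOn φ (Ioi N') := hint.mono_set hsub
  have hI : IntegrableOn (fun z => L / 2 * z⁻¹) (Ioi N') := by
    refine Integrable.mono' hint' ?_ ?_
    · exact ((measurable_const.mul measurable_inv).aestronglyMeasurable)
    · filter_upwards [ae_restrict_mem measurableSet_Ioi] with z hz
      have hzN : N ≤ z := le_trans (le_max_left _ _) (le_of_lt hz)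
      have hz0 : 0 < z := lt_trans hN'pos hz
      have h2 : L / 2 < z * φ z := (hN z hzN).1
      have hinv : 0 < z⁻¹ := inv_pos.2 hz0
      rw [norm_eq_abs, abs_of_nonneg (by positivity)]
      nlinarith [mul_pos (sub_pos.2 h2) hinv, mul_inv_cancel₀ hz0.ne']
  have hIinv : IntegrableOn (fun z : ℝ => z ^ (-1 : ℝ)) (Ioi N') := by
    have h2 := hI.const_mul (2 / L)
    refine IntegrableOn.congr_fun h2 ?_ measurableSet_Ioi
    intro x hx
    show 2 / L * (L / 2 * x⁻¹) = x ^ (-1:ℝ)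
    rw [Real.rpow_neg_one]
    field_simp
  rw [integrableOn_Ioi_rpow_iff hN'pos] at hIinv
  linarith

lemma limit_zero_nhdsGT {φ : ℝ → ℝ} {L δ : ℝ} (hδ : 0 < δ)
    (hint : IntegrableOn φ (Ioo 0 δ)) (hpos : ∀ z ∈ Ioo (0:ℝ) δ, 0 ≤ φ z)
    (hlim : Tendsto (fun z => z * φ z) (nhdsWithin 0 (Ioi 0)) (nhds L)) : L = 0 := by
  have hL0 : 0 ≤ L := by
    refine ge_of_tendsto hlim ?_
    filter_upwards [Ioo_mem_nhdsGT_of_mem (⟨le_rfl, hδ⟩ : (0:ℝ) ∈ Ico 0 δ)] with z hz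
    exact mul_nonneg hz.1.le (hpos z hz)
  rcases hL0.eq_or_lt with h | hL
  · exact h.symm
  exfalso
  have hev : ∀ᶠ z in nhdsWithin 0 (Ioi 0), L / 2 < z * φ z :=
    hlim.eventually (eventually_gt_nhds (by linarith))
  rw [eventually_nhdsWithin_iff] at hev
  rcases Metric.eventually_nhds_iff.mp hev with ⟨ε, hε, hball⟩
  set δ' : ℝ := min δ ε with hδ'
  have hδ'pos : 0 < δ' := lt_min hδ hε
  have hkey : ∀ z ∈ Ioo (0:ℝ) δ', L / 2 * z⁻¹ ≤ φ z := by
    intro z hz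
    have hz0 : 0 < z := hz.1
    have hzd : dist z 0 < ε := by
      rw [Real.dist_eq, sub_zero, abs_of_pos hz0]
      exact lt_of_lt_of_le hz.2 (min_le_right _ _)
    have h2 : L / 2 < z * φ z := hball hzd hz0
    have hinv : 0 < z⁻¹ := inv_pos.2 hz0
    nlinarith [mul_pos (sub_pos.2 h2) hinv, mul_inv_cancel₀ hz0.ne']
  have hint' : IntegrableOn φ (Ioo 0 δ') :=
    hint.mono_set (Ioo_subset_Ioo le_rfl (min_le_left _ _))
  have hI : IntegrableOn (fun z => L / 2 * z⁻¹) (Ioo 0 δ') := by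
    refine Integrable.mono' hint' ?_ ?_
    · exact ((measurable_const.mul measurable_inv).aestronglyMeasurable)
    · filter_upwards [ae_restrict_mem measurableSet_Ioo] with z hz
      have h0 : 0 ≤ L / 2 * z⁻¹ := mul_nonneg (by linarith) (inv_nonneg.2 hz.1.le)
      rw [norm_eq_abs, abs_of_nonneg h0]
      exact hkey z hz
  have hIinv : IntegrableOn (fun z : ℝ => z ^ (-1 : ℝ)) (Ioo 0 δ') := by
    have h2 := hI.const_mul (2 / L)
    refine IntegrableOn.congr_fun h2 ?_ measurableSet_Ioo
    intro x hx
    show 2 / L * (L / 2 * x⁻¹) = x ^ (-1:ℝ)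
    rw [Real.rpow_neg_one]
    field_simp
  rw [intervalIntegral.integrableOn_Ioo_rpow_iff hδ'pos] at hIinv
  linarith


lemma main_aux (C₁ : ℝ) (hC₁ : 0 < C₁) (w u F : ℝ → ℝ) (α : ℝ)
    (hαpos : 0 < α) (hααs : α ≤ 4 / C₁)
    (hw : ContDiffOn ℝ (⊤ : ℕ∞) w (Ioi 0)) (hwpos : ∀ z ∈ Ioi (0:ℝ), 0 < w z)
    (hC1w : ∀ z ∈ Ioi (0:ℝ), |deriv (fun x => x * w x) z| ≤ C₁ * w z)
    (hu : ContDiffOn ℝ (⊤ : ℕ∞) u (Ioi 0))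
    (hmeasu : Measurable u)
    (hFint : IntegrableOn (fun z => (F z)^2 * w z) (Ioi 0))
    (hAint : IntegrableOn (fun z => (u z)^2 * w z) (Ioi 0))
    (hBint : IntegrableOn (fun z => (z * deriv u z)^2 * w z) (Ioi 0))
    (hEq : ∀ z ∈ Ioi (0:ℝ), α^2 * (z * deriv u z) + 4 * α * u z = F z) :
    α * Real.sqrt (∫ z in Ioi (0:ℝ), (u z)^2 * w z)
      + α^2 * Real.sqrt (∫ z in Ioi (0:ℝ), (z * deriv u z)^2 * w z)
      ≤ 5 * Real.sqrt (∫ z in Ioi (0:ℝ), (F z)^2 * w z) := by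
  have hIoi : IsOpen (Ioi (0:ℝ)) := isOpen_Ioi
  have hαne : α ≠ 0 := hαpos.ne'
  set A := ∫ z in Ioi (0:ℝ), (u z)^2 * w z with hA_def
  set B := ∫ z in Ioi (0:ℝ), (z * deriv u z)^2 * w z with hB_def
  set G := ∫ z in Ioi (0:ℝ), (F z)^2 * w z with hG_def
  have hA0 : 0 ≤ A := setIntegral_nonneg measurableSet_Ioi
    (fun z hz => mul_nonneg (sq_nonneg _) (hwpos z hz).le)
  have hB0 : 0 ≤ B := setIntegral_nonneg measurableSet_Ioi
    (fun z hz => mul_nonneg (sq_nonneg _) (hwpos z hz).le)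
  have hG0 : 0 ≤ G := setIntegral_nonneg measurableSet_Ioi
    (fun z hz => mul_nonneg (sq_nonneg _) (hwpos z hz).le)
  -- differentiability
  have hudiff : ∀ x ∈ Ioi (0:ℝ), DifferentiableAt ℝ u x := fun x hx =>
    ((hu x hx).contDiffAt (hIoi.mem_nhds hx)).differentiableAt (by simp)
  have hwdiff : ∀ x ∈ Ioi (0:ℝ), DifferentiableAt ℝ w x := fun x hx =>
    ((hw x hx).contDiffAt (hIoi.mem_nhds hx)).differentiableAt (by simp)
  set g : ℝ → ℝ := fun z => (z * w z) * (u z)^2 with hg_def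
  set gd : ℝ → ℝ := fun z =>
    deriv (fun x => x * w x) z * (u z)^2 + (z * w z) * (2 * u z * deriv u z) with hgd_def
  have hgderiv : ∀ x ∈ Ioi (0:ℝ), HasDerivAt g (gd x) x := by
    intro x hx
    have hW : HasDerivAt (fun y => y * w y) (deriv (fun y => y * w y) x) x :=
      (differentiableAt_id.mul (hwdiff x hx)).hasDerivAt
    have hU : HasDerivAt u (deriv u x) x := (hudiff x hx).hasDerivAt
    have h2 := hW.mul (hU.pow 2)
    convert h2 using 1
    · rfl
    · rfl
    · rfl
    · simp only [hgd_def, Pi.pow_apply]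
      norm_num
  set combo : ℝ → ℝ := fun z =>
    deriv (fun x => x * w x) z * (u z)^2 + (2/α^2) * (F z * u z * w z)
      - (8/α) * ((u z)^2 * w z) with hcombo_def
  have hcombo_eq : EqOn gd combo (Ioi 0) := by
    intro z hz
    have h := hEq z hz
    have hz0 : (0:ℝ) < z := hz
    have hQ : z * deriv u z = (F z - 4*α*u z)/α^2 := by
      field_simp
      linarith
    show deriv (fun x => x * w x) z * (u z)^2 + (z * w z) * (2 * u z * deriv u z)
      = deriv (fun x => x * w x) z * (u z)^2 + (2/α^2) * (F z * u z * w z)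
        - (8/α) * ((u z)^2 * w z)
    have h3 : (z * w z) * (2 * u z * deriv u z) = 2 * u z * w z * (z * deriv u z) := by ring
    rw [h3, hQ]
    field_simp
    ring
  -- measurability
  have hwae : AEMeasurable w (volume.restrict (Ioi (0:ℝ))) :=
    hw.continuousOn.aemeasurable measurableSet_Ioi
  have hFae : F =ᵐ[volume.restrict (Ioi (0:ℝ))]
      (fun z => α^2*(z*deriv u z) + 4*α*u z) := by
    filter_upwards [ae_restrict_mem measurableSet_Ioi] with z hz
    exact (hEq z hz).symm
  have hFmeas : AEMeasurable F (volume.restrict (Ioi (0:ℝ))) := by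
    have hm : Measurable (fun z => α^2*(z*deriv u z) + 4*α*u z) :=
      ((measurable_const.mul (measurable_id.mul (measurable_deriv u))).add
        (measurable_const.mul hmeasu))
    exact hm.aemeasurable.congr hFae.symm
  -- integrability
  have int_p1 : IntegrableOn (fun z => deriv (fun x => x * w x) z * (u z)^2) (Ioi 0) := by
    refine Integrable.mono' (hAint.const_mul C₁) ?_ ?_
    · exact ((measurable_deriv (fun x => x * w x)).mul (hmeasu.pow_const 2)).aestronglyMeasurable
    · filter_upwards [ae_restrict_mem measurableSet_Ioi] with z hz
      have h1 := hC1w z hz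
      rw [norm_eq_abs, abs_mul, abs_of_nonneg (sq_nonneg (u z))]
      nlinarith [sq_nonneg (u z), abs_nonneg (deriv (fun x => x * w x) z)]
  have int_Fuw : IntegrableOn (fun z => F z * u z * w z) (Ioi 0) := by
    refine Integrable.mono' ((hFint.add hAint).const_mul (1/2)) ?_ ?_
    · exact ((hFmeas.mul hmeasu.aemeasurable).mul hwae).aestronglyMeasurable
    · filter_upwards [ae_restrict_mem measurableSet_Ioi] with z hz
      have hw0 := (hwpos z hz).le
      have h2ab : 2*|F z * u z| ≤ (F z)^2 + (u z)^2 := by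
        rw [abs_mul]
        nlinarith [sq_nonneg (|F z| - |u z|), sq_abs (F z), sq_abs (u z)]
      rw [norm_eq_abs, abs_mul, abs_of_nonneg hw0]
      calc |F z * u z| * w z ≤ ((1/2)*((F z)^2 + (u z)^2)) * w z := by nlinarith
      _ = 1/2 * ((F z)^2 * w z + (u z)^2 * w z) := by ring
  have int_combo : IntegrableOn combo (Ioi 0) :=
    (int_p1.add (int_Fuw.const_mul (2/α^2))).sub (hAint.const_mul (8/α))
  have int_gd : IntegrableOn gd (Ioi 0) :=
    int_combo.congr_fun (fun z hz => (hcombo_eq hz).symm) measurableSet_Ioi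
  -- FTC
  have hFTC : ∀ a b : ℝ, 0 < a → a ≤ b → ∫ x in a..b, gd x = g b - g a := by
    intro a b ha hab
    refine intervalIntegral.integral_eq_sub_of_hasDerivAt (fun x hx => ?_) ?_
    · refine hgderiv x ?_
      rw [uIcc_of_le hab] at hx
      exact lt_of_lt_of_le ha hx.1
    · rw [intervalIntegrable_iff, uIoc_of_le hab]
      exact int_gd.mono_set (fun x hx => lt_trans ha hx.1)
  -- limit at top
  have hTop : Tendsto g atTop (nhds ((∫ x in Ioi (1:ℝ), gd x) + g 1)) := by
    have h1 : Tendsto (fun b => ∫ x in (1:ℝ)..b, gd x) atTop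
        (nhds (∫ x in Ioi (1:ℝ), gd x)) :=
      intervalIntegral_tendsto_integral_Ioi 1
        (int_gd.mono_set (Ioi_subset_Ioi zero_le_one)) tendsto_id
    refine Tendsto.congr' ?_ (h1.add_const (g 1))
    filter_upwards [eventually_ge_atTop (1:ℝ)] with b hb
    rw [hFTC 1 b one_pos hb]
    ring
  have hL1 : (∫ x in Ioi (1:ℝ), gd x) + g 1 = 0 := by
    refine limit_zero_atTop (φ := fun z => (u z)^2 * w z) one_pos
      (hAint.mono_set (Ioi_subset_Ioi zero_le_one))
      (fun z hz => mul_nonneg (sq_nonneg _) (hwpos z (mem_Ioi.2 (lt_trans one_pos hz))).le) ?_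
    refine Tendsto.congr (fun x => ?_) hTop
    show (x * w x) * (u x)^2 = x * ((u x)^2 * w x)
    ring
  -- limit at 0
  have hT0 : Tendsto (fun a : ℝ => ∫ x in Ioc a (1:ℝ), gd x) (nhdsWithin 0 (Ioi 0))
      (nhds (∫ x in Ioc (0:ℝ) 1, gd x)) := by
    have hgdae : AEStronglyMeasurable gd (volume.restrict (Ioc (0:ℝ) 1)) := by
      have hwae1 : AEMeasurable w (volume.restrict (Ioc (0:ℝ) 1)) :=
        hwae.mono_measure (Measure.restrict_mono Ioc_subset_Ioi_self le_rfl)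
      have : AEMeasurable gd (volume.restrict (Ioc (0:ℝ) 1)) := by
        refine (((measurable_deriv (fun x => x * w x)).aemeasurable).mul
          ((hmeasu.pow_const 2).aemeasurable)).add ?_
        exact (aemeasurable_id.mul hwae1).mul
          (((measurable_const.mul hmeasu).mul (measurable_deriv u)).aemeasurable)
      exact this.aestronglyMeasurable
    have hdct := tendsto_integral_filter_of_dominated_convergence
      (μ := volume.restrict (Ioc (0:ℝ) 1)) (F := fun (a:ℝ) => (Ioi a).indicator gd)
      (f := gd) (l := nhdsWithin 0 (Ioi 0)) (bound := fun x => |gd x|)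
      (Eventually.of_forall (fun a => hgdae.indicator measurableSet_Ioi))
      (Eventually.of_forall (fun a => ae_of_all _ (fun x =>
        norm_indicator_le_norm_self (s := Ioi a) (f := gd) (a := x))))
      ((int_gd.mono_set Ioc_subset_Ioi_self).abs)
      (by
        filter_upwards [ae_restrict_mem measurableSet_Ioc] with x hx
        refine Tendsto.congr' ?_ tendsto_const_nhds
        filter_upwards [Ioo_mem_nhdsGT_of_mem (⟨le_rfl, hx.1⟩ : (0:ℝ) ∈ Ico 0 x)] with a ha
        exact (indicator_of_mem (mem_Ioi.2 ha.2) gd).symm)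
    refine Tendsto.congr' ?_ hdct
    filter_upwards [Ioo_mem_nhdsGT_of_mem (⟨le_rfl, one_pos⟩ : (0:ℝ) ∈ Ico 0 1)] with a ha
    rw [integral_indicator measurableSet_Ioi, Measure.restrict_restrict measurableSet_Ioi]
    congr 1
    have : Ioi a ∩ Ioc 0 1 = Ioc a 1 := by
      ext x
      simp only [mem_inter_iff, mem_Ioi, mem_Ioc]
      constructor
      · rintro ⟨h1, _, h3⟩; exact ⟨h1, h3⟩
      · rintro ⟨h1, h2⟩; exact ⟨h1, lt_trans ha.1 h1, h2⟩
    rw [this]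
  have hBot : Tendsto g (nhdsWithin 0 (Ioi 0)) (nhds (g 1 - ∫ x in Ioc (0:ℝ) 1, gd x)) := by
    refine Tendsto.congr' ?_ ((tendsto_const_nhds (x := g 1)).sub hT0)
    filter_upwards [Ioo_mem_nhdsGT_of_mem (⟨le_rfl, one_pos⟩ : (0:ℝ) ∈ Ico 0 1)] with a ha
    have h4 := hFTC a 1 ha.1 ha.2.le
    rw [intervalIntegral.integral_of_le ha.2.le] at h4
    linarith
  have hL0 : g 1 - (∫ x in Ioc (0:ℝ) 1, gd x) = 0 := by
    refine limit_zero_nhdsGT (φ := fun z => (u z)^2 * w z) one_pos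
      (hAint.mono_set Ioo_subset_Ioi_self)
      (fun z hz => mul_nonneg (sq_nonneg _) (hwpos z hz.1).le) ?_
    refine Tendsto.congr (fun x => ?_) hBot
    show (x * w x) * (u x)^2 = x * ((u x)^2 * w x)
    ring
  have hsplit : ∫ x in Ioi (0:ℝ), gd x = 0 := by
    have hun : Ioc (0:ℝ) 1 ∪ Ioi 1 = Ioi 0 := Ioc_union_Ioi_eq_Ioi zero_le_one
    rw [← hun, setIntegral_union (Ioc_disjoint_Ioi le_rfl) measurableSet_Ioi
      (int_gd.mono_set Ioc_subset_Ioi_self) (int_gd.mono_set (Ioi_subset_Ioi zero_le_one))]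
    linarith
  have hcombo0 : ∫ x in Ioi (0:ℝ), combo x = 0 := by
    have he : ∫ x in Ioi (0:ℝ), combo x = ∫ x in Ioi (0:ℝ), gd x :=
      setIntegral_congr_fun measurableSet_Ioi (fun z hz => (hcombo_eq hz).symm)
    exact he.trans hsplit
  set P1 := ∫ x in Ioi (0:ℝ), deriv (fun x => x * w x) x * (u x)^2 with hP1_def
  set P2 := ∫ x in Ioi (0:ℝ), F x * u x * w x with hP2_def
  have hPsum : P1 + (2/α^2) * P2 - (8/α) * A = 0 := by
    simp only [hcombo_def] at hcombo0
    have h1 : IntegrableOn (fun z => deriv (fun x => x * w x) z * (u z)^2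
        + (2/α^2) * (F z * u z * w z)) (Ioi 0) volume :=
      int_p1.add (int_Fuw.const_mul (2/α^2))
    rw [integral_sub h1 (hAint.const_mul (8/α)),
      integral_add int_p1 (int_Fuw.const_mul (2/α^2)),
      integral_const_mul, integral_const_mul, ← hA_def, ← hP1_def, ← hP2_def] at hcombo0
    exact hcombo0
  have hP1bound : |P1| ≤ C₁ * A := by
    have hb := norm_integral_le_of_norm_le (μ := volume.restrict (Ioi (0:ℝ)))
      (f := fun z => deriv (fun x => x * w x) z * (u z)^2) (hAint.const_mul C₁) ?_
    · rw [integral_const_mul, ← hA_def, ← hP1_def] at hb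
      rw [← Real.norm_eq_abs]
      exact hb
    · filter_upwards [ae_restrict_mem measurableSet_Ioi] with z hz
      have h1 := hC1w z hz
      rw [norm_eq_abs, abs_mul, abs_of_nonneg (sq_nonneg (u z))]
      nlinarith [sq_nonneg (u z), abs_nonneg (deriv (fun x => x * w x) z)]
  have hP2bound : |P2| ≤ (1/(4*α)) * G + α * A := by
    have h2b : IntegrableOn (fun z => (1/(4*α)) * ((F z)^2 * w z)
        + α * ((u z)^2 * w z)) (Ioi 0) volume :=
      (hFint.const_mul (1/(4*α))).add (hAint.const_mul α)
    have hb := norm_integral_le_of_norm_le (μ := volume.restrict (Ioi (0:ℝ)))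
      (f := fun z => F z * u z * w z) h2b ?_
    · rw [integral_add (hFint.const_mul (1/(4*α))) (hAint.const_mul α),
        integral_const_mul, integral_const_mul, ← hG_def, ← hA_def, ← hP2_def] at hb
      rw [← Real.norm_eq_abs]
      exact hb
    · filter_upwards [ae_restrict_mem measurableSet_Ioi] with z hz
      have hw0 := (hwpos z hz).le
      have h4α : (0:ℝ) < 4*α := by positivity
      have h2ab : 4*α*|F z * u z| ≤ (F z)^2 + (2*α)^2*(u z)^2 := by
        rw [abs_mul]
        nlinarith [sq_nonneg (|F z| - 2*α*|u z|), sq_abs (F z), sq_abs (u z),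
          abs_nonneg (F z), abs_nonneg (u z)]
      have h3 : |F z * u z| ≤ (1/(4*α))*(F z)^2 + α*(u z)^2 := by
        rw [show (1:ℝ)/(4*α)*(F z)^2 + α*(u z)^2 = ((F z)^2 + (2*α)^2*(u z)^2)/(4*α) by
          field_simp; ring]
        rw [le_div_iff₀ h4α]
        nlinarith [h2ab]
      rw [norm_eq_abs, abs_mul, abs_of_nonneg hw0]
      calc |F z * u z| * w z ≤ ((1/(4*α))*(F z)^2 + α*(u z)^2) * w z :=
            mul_le_mul_of_nonneg_right h3 hw0
      _ = 1/(4*α)*((F z)^2 * w z) + α*((u z)^2 * w z) := by ring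
  -- energy conclusion
  have hαC : α * C₁ ≤ 4 := by
    rw [le_div_iff₀ hC₁] at hααs
    exact hααs
  have hstep : α * A ≤ (1/(4*α)) * G := by
    have hq1 : (α^2/2)*P1 ≤ 2*(α*A) := by
      have hh := mul_le_mul_of_nonneg_left hP1bound (by positivity : (0:ℝ) ≤ α^2/2)
      have hh2 := mul_le_mul_of_nonneg_right hαC (mul_nonneg hαpos.le hA0)
      nlinarith [le_abs_self P1]
    have hq2 : 4*α*A = (α^2/2)*P1 + P2 := by
      have h6 : (α^2/2) * (P1 + (2/α^2)*P2 - (8/α)*A) = (α^2/2)*P1 + P2 - 4*α*A := by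
        field_simp
        ring
      rw [hPsum, mul_zero] at h6
      linarith
    linarith [le_abs_self P2, hP2bound, hq1, hq2]
  have hA2 : α^2 * A ≤ G/4 := by
    have hh := mul_le_mul_of_nonneg_left hstep hαpos.le
    have hc : α * ((1/(4*α))*G) = G/4 := by field_simp
    calc α^2 * A = α * (α * A) := by ring
    _ ≤ α * ((1/(4*α))*G) := hh
    _ = G/4 := hc
  -- B bound
  have hBineq : α^4 * B ≤ 2*G + 32*(α^2*A) := by
    have hmono : (∫ z in Ioi (0:ℝ), α^4 * ((z * deriv u z)^2 * w z))
        ≤ ∫ z in Ioi (0:ℝ), (2*((F z)^2*w z) + 32*α^2*((u z)^2*w z)) :=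
      setIntegral_mono_on (hBint.const_mul (α^4))
        ((hFint.const_mul 2).add (hAint.const_mul (32*α^2)))
        measurableSet_Ioi ?_
    · rw [integral_const_mul, integral_add (hFint.const_mul 2) (hAint.const_mul (32*α^2)),
        integral_const_mul, integral_const_mul, ← hA_def, ← hB_def, ← hG_def] at hmono
      linarith
    · intro z hz
      have h := hEq z hz
      have hw0 := (hwpos z hz).le
      have hsq : (α^2*(z*deriv u z))^2 * w z = (F z - 4*α*u z)^2 * w z := by
        have : α^2*(z*deriv u z) = F z - 4*α*u z := by linarith
        rw [this]
      have hineq : (F z - 4*α*u z)^2 * w z ≤ (2*(F z)^2 + 32*α^2*(u z)^2) * w z :=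
        mul_le_mul_of_nonneg_right (by nlinarith [sq_nonneg (F z + 4*α*u z)]) hw0
      nlinarith [hsq, hineq]
  have hB10 : α^4 * B ≤ 10*G := by linarith
  -- final
  have e1 : α * Real.sqrt A = Real.sqrt (α^2 * A) := by
    rw [Real.sqrt_mul (sq_nonneg α), Real.sqrt_sq hαpos.le]
  have e2 : α^2 * Real.sqrt B = Real.sqrt (α^4 * B) := by
    rw [Real.sqrt_mul (by positivity : (0:ℝ) ≤ α^4),
      show α^4 = (α^2)^2 by ring, Real.sqrt_sq (sq_nonneg α)]
  have s1 : Real.sqrt (α^2 * A) ≤ Real.sqrt G * (1/2) := by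
    refine le_trans (Real.sqrt_le_sqrt hA2) ?_
    rw [show G/4 = G*(1/2)^2 by ring, Real.sqrt_mul hG0, Real.sqrt_sq (by norm_num : (0:ℝ) ≤ 1/2)]
  have s2 : Real.sqrt (α^4 * B) ≤ 4 * Real.sqrt G := by
    refine le_trans (Real.sqrt_le_sqrt hB10) ?_
    rw [Real.sqrt_mul (by norm_num : (0:ℝ) ≤ 10)]
    have h10 : Real.sqrt 10 ≤ 4 := by
      refine le_trans (Real.sqrt_le_sqrt (by norm_num : (10:ℝ) ≤ 16)) ?_
      rw [show (16:ℝ) = 4^2 by norm_num, Real.sqrt_sq (by norm_num : (0:ℝ) ≤ 4)]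
    exact mul_le_mul_of_nonneg_right h10 (Real.sqrt_nonneg G)
  rw [e1, e2]
  have := Real.sqrt_nonneg G
  linarith

/-- Weighted estimate for the second-shell ODE: if the weight `w > 0` satisfies
`lim_{z→0} z³w(z) = 0` and `|∂_z(zw)| ≤ C₁ w`, then there exist `α* > 0` (depending only
on `C₁`) and `C₂` such that any smooth decaying solution of
`α² D_z² Ψ₂ + 4α D_z Ψ₂ = F₂` with `0 ≤ α ≤ α*` satisfies
`α ‖D_zΨ₂‖_{L²_w} + α² ‖D_z²Ψ₂‖_{L²_w} ≤ C₂ ‖F₂‖_{L²_w}`. -/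
theorem stmt11 (C₁ : ℝ) (hC₁ : 0 < C₁) : ∃ αs > (0:ℝ), ∃ C₂ > (0:ℝ),
    ∀ (w Ψ F : ℝ → ℝ) (α : ℝ), 0 ≤ α → α ≤ αs →
    ContDiffOn ℝ (⊤ : ℕ∞) w (Ioi 0) → (∀ z ∈ Ioi (0:ℝ), 0 < w z) →
    Filter.Tendsto (fun z => z^3 * w z) (nhdsWithin 0 (Ioi 0)) (nhds 0) →
    (∀ z ∈ Ioi (0:ℝ), |deriv (fun x => x * w x) z| ≤ C₁ * w z) →
    ContDiffOn ℝ (⊤ : ℕ∞) Ψ (Ioi 0) →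
    Filter.Tendsto Ψ Filter.atTop (nhds 0) →
    Filter.Tendsto (fun z => z * deriv Ψ z) Filter.atTop (nhds 0) →
    IntegrableOn (fun z => (F z)^2 * w z) (Ioi 0) →
    IntegrableOn (fun z => (z * deriv Ψ z)^2 * w z) (Ioi 0) →
    IntegrableOn (fun z => (z * deriv (fun x => x * deriv Ψ x) z)^2 * w z) (Ioi 0) →
    (∀ z ∈ Ioi (0:ℝ),
      α^2 * (z * deriv (fun x => x * deriv Ψ x) z) + 4 * α * (z * deriv Ψ z) = F z) →
    α * Real.sqrt (∫ z in Ioi (0:ℝ), (z * deriv Ψ z)^2 * w z)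
      + α^2 * Real.sqrt (∫ z in Ioi (0:ℝ), (z * deriv (fun x => x * deriv Ψ x) z)^2 * w z)
      ≤ C₂ * Real.sqrt (∫ z in Ioi (0:ℝ), (F z)^2 * w z) := by
  refine ⟨4 / C₁, by positivity, 5, by norm_num, ?_⟩
  intro w Ψ F α hα0 hααs hw hwpos _hz3 hC1w hΨ _hΨtop _hDΨtop hFint hAint hBint hEq
  rcases hα0.eq_or_lt with h0 | hαpos
  · rw [← h0]
    have h5 : (0:ℝ) ≤ 5 * Real.sqrt (∫ z in Ioi (0:ℝ), (F z)^2 * w z) := by positivity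
    simpa using h5
  · exact main_aux C₁ hC₁ w (fun z => z * deriv Ψ z) F α hαpos hααs hw hwpos hC1w
      (contDiffOn_id.mul (hΨ.deriv_of_isOpen isOpen_Ioi (by simp)))
      (measurable_id.mul (measurable_deriv Ψ))
      hFint hAint hBint hEq
end

section
/- Let Γ* = (Γ*₁, Γ*₂) satisfy the steady angular profile system 2 sin(2θ)∂_θ Γ*₁ + 6Γ*₁ = Γ*₂ and 2 sin(2θ)∂_θ Γ*₂ + 9Γ*₂ = B*² cos²θ (Γ*₁ − ⨍Γ*₁) on [0,π/2], with Γ*₁ ∈ C^{3/2}([0,π/2]) and Γ*₂ ∈ C²([0,π/2]), ⨍Γ*₁ = 2, and B*² = 130. Define G*₁ = z/(1+z)² Γ*₁(θ), G*₂ = −(2B*)^{-1} z/(1+z)² Γ*₂(θ), P*₀ = B*/(1+z). Then (G*₁, G*₂, P*₀) satisfy the self-similar profile system: G₁ + z∂_z G₁ + (1/2)L(G₁) sin(2θ)∂_θ G₁ + L(G₁)G₁ = −2P₀G₂; G₂ + z∂_z G₂ + (1/2)L(G₁) sin(2θ)∂_θ G₂ + (7/4)L(G₁)G₂ = −(1/2)cos²θ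 P₀ (G₁ − ⨍G₁); P₀ + z∂_z P₀ = (1/4)L(G₁)P₀. -/
/-! Since `⨍G₁(z,·) = 2z/(1+z)²`, the nonlocal coefficient is explicit: `L(G₁) = 4/(1+z)`.
With `z∂_z(z/(1+z)²) = z(1-z)/(1+z)³`, every term of the first two equations becomes
`z/(1+z)³` times an angular expression, and what remains are exactly the two steady profile
equations for `Γ₁, Γ₂`; the equation for `P₀` is the identity `(1+z)⁻¹ - z(1+z)⁻² = (1+z)⁻²`. -/

open Real Set MeasureTheory

noncomputable section

/-- `L(G)(z) = 2∫_z^∞ (1/z') ⨍G(z',·) dz'` with `⨍` the angular average over `[0,π/2]`. -/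
def Lprof (G : ℝ → ℝ → ℝ) (z : ℝ) : ℝ :=
  2 * ∫ z' in Ioi z, (1/z') * ((2/π) * ∫ θ in (0:ℝ)..(π/2), G z' θ)

lemma hasDerivAt_div_one_add_sq {z : ℝ} (hz : 1 + z ≠ 0) :
    HasDerivAt (fun w : ℝ => w / (1 + w) ^ 2) ((1 - z) / (1 + z) ^ 3) z := by
  have hsq : HasDerivAt (fun w : ℝ => (1 + w) ^ 2) (2 * (1 + z)) z := by
    simpa using ((hasDerivAt_id z).const_add 1).fun_pow 2
  refine ((hasDerivAt_id z).fun_div hsq (pow_ne_zero 2 hz)).congr_deriv ?_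
  simp only [id]
  field_simp
  ring

lemma hasDerivAt_const_div_one_add (c : ℝ) {z : ℝ} (hz : 1 + z ≠ 0) :
    HasDerivAt (fun w : ℝ => c / (1 + w)) (-c / (1 + z) ^ 2) z := by
  refine ((hasDerivAt_const z c).fun_div ((hasDerivAt_id z).const_add 1) hz).congr_deriv ?_
  simp

lemma integral_Ioi_one_div_one_add_sq {z : ℝ} (hz : -1 < z) :
    ∫ w in Ioi z, 1 / (1 + w) ^ 2 = 1 / (1 + z) := by
  have hpos : ∀ w ∈ Ici z, 0 < 1 + w := fun w hw => by linarith [mem_Ici.1 hw]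
  have hlim : Filter.Tendsto (fun w : ℝ => -1 / (1 + w)) Filter.atTop (nhds 0) := by
    simpa [div_eq_mul_inv] using
      ((Filter.tendsto_atTop_add_const_left _ 1 Filter.tendsto_id).inv_tendsto_atTop).const_mul
        (-1 : ℝ)
  rw [integral_Ioi_of_hasDerivAt_of_nonneg' (g := fun w => -1 / (1 + w))
    (fun w hw => by simpa using hasDerivAt_const_div_one_add (-1) (hpos w hw).ne')
    (fun w hw => by have := hpos w (mem_Ici_of_Ioi hw); positivity) hlim]
  ring

lemma Lprof_div_one_add_sq_mul (Γ : ℝ → ℝ) {z : ℝ} (hz : 0 ≤ z) :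
    Lprof (fun w φ => w / (1 + w) ^ 2 * Γ φ) z
      = 2 * ((2 / π) * ∫ θ in (0:ℝ)..(π/2), Γ θ) / (1 + z) := by
  have hintegrand : ∀ w ∈ Ioi z,
      (1 / w) * ((2 / π) * ∫ θ in (0:ℝ)..(π/2), w / (1 + w) ^ 2 * Γ θ)
        = ((2 / π) * ∫ θ in (0:ℝ)..(π/2), Γ θ) * (1 / (1 + w) ^ 2) := by
    intro w hw
    have hw : 0 < w := hz.trans_lt hw
    rw [intervalIntegral.integral_const_mul]
    field_simp
  rw [Lprof, setIntegral_congr_fun measurableSet_Ioi hintegrand, integral_const_mul,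
    integral_Ioi_one_div_one_add_sq (by linarith)]
  ring

section SelfSimilarEquations

variable {Γ₁ Γ₂ : ℝ → ℝ} {Bs z θ : ℝ}

lemma selfSimilar_G₁_eq (hB : Bs ≠ 0) (hz : 1 + z ≠ 0)
    (heq1 : 2 * Real.sin (2*θ) * deriv Γ₁ θ + 6 * Γ₁ θ = Γ₂ θ) :
    z / (1 + z) ^ 2 * Γ₁ θ + z * deriv (fun w => w / (1 + w) ^ 2 * Γ₁ θ) z
        + (1/2) * (4 / (1 + z)) * (Real.sin (2*θ) * deriv (fun φ => z / (1 + z) ^ 2 * Γ₁ φ) θ)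
        + 4 / (1 + z) * (z / (1 + z) ^ 2 * Γ₁ θ)
      = -2 * (Bs / (1 + z)) * (-(1 / (2 * Bs)) * (z / (1 + z) ^ 2) * Γ₂ θ) := by
  rw [((hasDerivAt_div_one_add_sq hz).mul_const _).deriv, deriv_const_mul_field, ← heq1]
  field_simp
  ring

lemma selfSimilar_G₂_eq (hB : Bs ≠ 0) (hz : 1 + z ≠ 0)
    (heq2 : 2 * Real.sin (2*θ) * deriv Γ₂ θ + 9 * Γ₂ θ
      = Bs^2 * (Real.cos θ)^2 * (Γ₁ θ - (2/π) * ∫ φ in (0:ℝ)..(π/2), Γ₁ φ)) :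
    -(1 / (2 * Bs)) * (z / (1 + z) ^ 2) * Γ₂ θ
        + z * deriv (fun w => -(1 / (2 * Bs)) * (w / (1 + w) ^ 2) * Γ₂ θ) z
        + (1/2) * (4 / (1 + z))
          * (Real.sin (2*θ) * deriv (fun φ => -(1 / (2 * Bs)) * (z / (1 + z) ^ 2) * Γ₂ φ) θ)
        + (7/4) * (4 / (1 + z)) * (-(1 / (2 * Bs)) * (z / (1 + z) ^ 2) * Γ₂ θ)
      = -(1/2) * (Real.cos θ)^2 * (Bs / (1 + z))
          * (z / (1 + z) ^ 2 * Γ₁ θ - (2/π) * ∫ φ in (0:ℝ)..(π/2), z / (1 + z) ^ 2 * Γ₁ φ) := by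
  rw [(((hasDerivAt_div_one_add_sq hz).const_mul _).mul_const _).deriv, deriv_const_mul_field,
    intervalIntegral.integral_const_mul]
  field_simp at heq2 ⊢
  linear_combination (-2 * z) * heq2

lemma selfSimilar_P₀_eq (hz : 1 + z ≠ 0) :
    Bs / (1 + z) + z * deriv (fun w => Bs / (1 + w)) z
      = (1/4) * (4 / (1 + z)) * (Bs / (1 + z)) := by
  rw [(hasDerivAt_const_div_one_add Bs hz).deriv]
  field_simp
  ring

end SelfSimilarEquations

theorem stmt13_general (Γ₁ Γ₂ : ℝ → ℝ) (Bs : ℝ) (hBpos : 0 < Bs)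
    (havg : (2/π) * (∫ θ in (0:ℝ)..(π/2), Γ₁ θ) = 2)
    (heq1 : ∀ θ ∈ Icc (0:ℝ) (π/2),
      2 * Real.sin (2*θ) * deriv Γ₁ θ + 6 * Γ₁ θ = Γ₂ θ)
    (heq2 : ∀ θ ∈ Icc (0:ℝ) (π/2),
      2 * Real.sin (2*θ) * deriv Γ₂ θ + 9 * Γ₂ θ
        = Bs^2 * (Real.cos θ)^2 * (Γ₁ θ - (2/π) * ∫ φ in (0:ℝ)..(π/2), Γ₁ φ)) :
    ∀ z ∈ Ioi (0:ℝ), ∀ θ ∈ Icc (0:ℝ) (π/2),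
      -- notation: G₁, G₂, P₀
      (fun (G₁ G₂ : ℝ → ℝ → ℝ) (Pz : ℝ → ℝ) =>
        (G₁ z θ + z * deriv (fun w => G₁ w θ) z
            + (1/2) * Lprof G₁ z * (Real.sin (2*θ) * deriv (fun φ => G₁ z φ) θ)
            + Lprof G₁ z * G₁ z θ
          = -2 * Pz z * G₂ z θ)
        ∧ (G₂ z θ + z * deriv (fun w => G₂ w θ) z
            + (1/2) * Lprof G₁ z * (Real.sin (2*θ) * deriv (fun φ => G₂ z φ) θ)
            + (7/4) * Lprof G₁ z * G₂ z θ
          = -(1/2) * (Real.cos θ)^2 * Pz z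
              * (G₁ z θ - (2/π) * ∫ φ in (0:ℝ)..(π/2), G₁ z φ))
        ∧ (Pz z + z * deriv Pz z = (1/4) * Lprof G₁ z * Pz z))
      (fun w φ => w/(1+w)^2 * Γ₁ φ)
      (fun w φ => -(1/(2*Bs)) * (w/(1+w)^2) * Γ₂ φ)
      (fun w => Bs/(1+w)) := by
  intro z hz θ hθ
  have hz1 : 1 + z ≠ 0 := by linarith [mem_Ioi.1 hz]
  have hL : Lprof (fun w φ => w/(1+w)^2 * Γ₁ φ) z = 4 / (1 + z) := by
    rw [Lprof_div_one_add_sq_mul Γ₁ (le_of_lt hz), havg]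
    ring
  dsimp only
  rw [hL]
  exact ⟨selfSimilar_G₁_eq hBpos.ne' hz1 (heq1 θ hθ), selfSimilar_G₂_eq hBpos.ne' hz1 (heq2 θ hθ),
    selfSimilar_P₀_eq hz1⟩

/-- From the angular steady profile to the full self-similar profile: if `(Γ₁, Γ₂)` solve
the angular system with `B*² = 130` and `⨍Γ₁ = 2`, then
`G₁ = z/(1+z)² Γ₁`, `G₂ = −(2B*)⁻¹ z/(1+z)² Γ₂`, `P₀ = B*/(1+z)` solve the
self-similar profile system. -/
theorem stmt13 (Γ₁ Γ₂ : ℝ → ℝ) (Bs : ℝ) (hBsq : Bs^2 = 130) (hBpos : 0 < Bs)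
    (hΓ₁reg : ContDiffOn ℝ 1 Γ₁ (Icc 0 (π/2)))
    (hΓ₁hold : ∃ C : NNReal, HolderOnWith C (1/2 : NNReal) (deriv Γ₁) (Icc 0 (π/2)))
    (hΓ₂reg : ContDiffOn ℝ 2 Γ₂ (Icc 0 (π/2)))
    (havg : (2/π) * (∫ θ in (0:ℝ)..(π/2), Γ₁ θ) = 2)
    (heq1 : ∀ θ ∈ Icc (0:ℝ) (π/2),
      2 * Real.sin (2*θ) * deriv Γ₁ θ + 6 * Γ₁ θ = Γ₂ θ)
    (heq2 : ∀ θ ∈ Icc (0:ℝ) (π/2),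
      2 * Real.sin (2*θ) * deriv Γ₂ θ + 9 * Γ₂ θ
        = Bs^2 * (Real.cos θ)^2 * (Γ₁ θ - (2/π) * ∫ φ in (0:ℝ)..(π/2), Γ₁ φ)) :
    ∀ z ∈ Ioi (0:ℝ), ∀ θ ∈ Icc (0:ℝ) (π/2),
      -- notation: G₁, G₂, P₀
      (fun (G₁ G₂ : ℝ → ℝ → ℝ) (Pz : ℝ → ℝ) =>
        (G₁ z θ + z * deriv (fun w => G₁ w θ) z
            + (1/2) * Lprof G₁ z * (Real.sin (2*θ) * deriv (fun φ => G₁ z φ) θ)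
            + Lprof G₁ z * G₁ z θ
          = -2 * Pz z * G₂ z θ)
        ∧ (G₂ z θ + z * deriv (fun w => G₂ w θ) z
            + (1/2) * Lprof G₁ z * (Real.sin (2*θ) * deriv (fun φ => G₂ z φ) θ)
            + (7/4) * Lprof G₁ z * G₂ z θ
          = -(1/2) * (Real.cos θ)^2 * Pz z
              * (G₁ z θ - (2/π) * ∫ φ in (0:ℝ)..(π/2), G₁ z φ))
        ∧ (Pz z + z * deriv Pz z = (1/4) * Lprof G₁ z * Pz z))
      (fun w φ => w/(1+w)^2 * Γ₁ φ)
      (fun w φ => -(1/(2*Bs)) * (w/(1+w)^2) * Γ₂ φ)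
      (fun w => Bs/(1+w)) :=
  stmt13_general Γ₁ Γ₂ Bs hBpos havg heq1 heq2

end
end

section
/- Let Q = (Q₁, Q₂) with Q̄ᵢ := Qᵢ − Qᵢ(θ=0) ≤ 0 pointwise on [0, π/2]. Suppose (Q₁(t), Q₂(t)) evolve by ∂_t Q₁ + 2sin(2θ)∂_θ Q₁ + 6Q₁ = Q₂ and ∂_t Q₂ + 2sin(2θ)∂_θ Q₂ + 9Q₂ = 130 cos²θ(Q₁ − ⨍Q₁). Then the non-positivity of Q̄₁ and Q̄₂ is preserved in time: if Q̄₁(0,·) ≤ 0 and Q̄₂(0,·) ≤ 0, then Q̄₁(t,·) ≤ 0 and Q̄₂(t,·) ≤ 0 for all t ≥ 0. -/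
/-!
Write `Q̄ᵢ(t, θ) = Qᵢ(t, θ) - Qᵢ(t, 0)` and compare `max (Q̄₁, Q̄₂)` with the barrier `ε e^{130 t}`
at the first time `t₀` it is touched, say at the angle `θ₀`. There `Qᵢ(t₀, ·)` is maximal on
`[0, π/2]` at `θ₀`, so the transport term `sin(2θ) ∂_θ Qᵢ` vanishes (at the endpoints because
`sin(2θ)` does), and subtracting the equation at `θ = 0` gives `∂_t Q̄₁ ≤ -5 ε e^{130 t₀}`, resp.
`∂_t Q̄₂ ≤ 121 ε e^{130 t₀}`: in the second equation `Q₁ - ⨍Q₁ = cos²θ Q̄₁ - sin²θ (Q₁(0) - ⨍Q₁)`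
and both parts are bounded by the barrier. Since `121 < 130`, the barrier cannot be touched from
below; letting `ε → 0` gives the claim.
-/

open Real Set Filter Topology

theorem HasDerivAt.nonneg_of_eventually_le_left {f : ℝ → ℝ} {d t : ℝ} (hf : HasDerivAt f d t)
    (hle : ∀ᶠ s in 𝓝[<] t, f s ≤ f t) : 0 ≤ d := by
  have hslope : Tendsto (slope f t) (𝓝[<] t) (𝓝 d) :=
    (hasDerivAt_iff_tendsto_slope.mp hf).mono_left (nhdsWithin_mono _ fun _ hs => ne_of_lt hs)
  refine ge_of_tendsto hslope ?_
  filter_upwards [hle, self_mem_nhdsWithin] with s hs hst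
  rw [slope_def_field]
  exact div_nonneg_of_nonpos (sub_nonpos.mpr hs) (sub_nonpos.mpr (le_of_lt hst))

theorem forall_neg_of_not_first_zero {X : Type*} [TopologicalSpace X] {K : Set X}
    (hK : IsCompact K) {g : ℝ → X → ℝ} (hg : Continuous fun p : ℝ × X => g p.1 p.2)
    (h0 : ∀ x ∈ K, g 0 x < 0)
    (hstep : ∀ t > 0, (∀ s ∈ Ico 0 t, ∀ y ∈ K, g s y < 0) → (∀ y ∈ K, g t y ≤ 0) →
      ∀ x ∈ K, g t x ≠ 0) :
    ∀ t ≥ 0, ∀ x ∈ K, g t x < 0 := by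
  intro T hT x hx
  by_contra! hTx
  have hB : IsCompact (Icc 0 T ×ˢ K ∩ {p | 0 ≤ g p.1 p.2}) :=
    (isCompact_Icc.prod hK).inter_right (isClosed_le continuous_const hg)
  obtain ⟨⟨t₀, x₀⟩, ⟨⟨ht₀, hx₀⟩, hgx₀⟩, hmin⟩ :=
    hB.exists_isMinOn ⟨(T, x), ⟨⟨hT, le_rfl⟩, hx⟩, hTx⟩ continuous_fst.continuousOn
  have hbefore : ∀ s ∈ Ico 0 t₀, ∀ y ∈ K, g s y < 0 := by
    intro s hs y hy
    by_contra! hsy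
    exact hs.2.not_ge (hmin (a := (s, y)) ⟨⟨⟨hs.1, hs.2.le.trans ht₀.2⟩, hy⟩, hsy⟩)
  have ht₀pos : 0 < t₀ :=
    ht₀.1.lt_of_ne (by rintro rfl; exact (h0 x₀ hx₀).not_ge hgx₀)
  have hnow : ∀ y ∈ K, g t₀ y ≤ 0 := by
    intro y hy
    have hcont : Continuous fun s => g s y := hg.comp (Continuous.prodMk_left y)
    refine le_of_tendsto
      (hcont.continuousAt.tendsto.mono_left (nhdsWithin_le_nhds (s := Iio t₀))) ?_
    filter_upwards [Ioo_mem_nhdsLT ht₀pos] with s hs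
    exact (hbefore s ⟨hs.1.le, hs.2⟩ y hy).le
  exact hstep t₀ ht₀pos hbefore hnow x₀ hx₀ (le_antisymm (hnow x₀ hx₀) hgx₀)

theorem sin_two_mul_mul_deriv_eq_zero_of_isMaxOn {f : ℝ → ℝ} {θ : ℝ} (hθ : θ ∈ Icc 0 (π / 2))
    (hmax : IsMaxOn f (Icc 0 (π / 2)) θ) : sin (2 * θ) * deriv f θ = 0 := by
  rcases hθ.1.eq_or_lt with rfl | hθ₀
  · simp
  rcases hθ.2.eq_or_lt with rfl | hθπ
  · simp [mul_div_cancel₀ π two_ne_zero]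
  rw [(hmax.isLocalMax (Icc_mem_nhds hθ₀ hθπ)).deriv_eq_zero, mul_zero]

theorem intervalIntegral.integral_le_mul_of_le {f : ℝ → ℝ} {a b c : ℝ} (hab : a ≤ b)
    (hf : IntervalIntegrable f MeasureTheory.volume a b) (hle : ∀ x ∈ Icc a b, f x ≤ c) :
    ∫ x in a..b, f x ≤ (b - a) * c := by
  simpa using intervalIntegral.integral_mono_on hab hf intervalIntegrable_const hle

section AngularSystem

variable {Q Q₁ Q₂ : ℝ → ℝ → ℝ} {k ε t θ E : ℝ}

theorem le_deriv_of_first_touch (hQ : ContDiff ℝ 1 fun p : ℝ × ℝ => Q p.1 p.2) (ht : 0 < t)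
    (hbefore : ∀ s ∈ Ico 0 t, Q s θ - Q s 0 < ε * exp (k * s))
    (htouch : Q t θ - Q t 0 = ε * exp (k * t)) :
    k * (ε * exp (k * t)) ≤ deriv (fun s => Q s θ) t - deriv (fun s => Q s 0) t := by
  have hdiff : ∀ φ, DifferentiableAt ℝ (fun s => Q s φ) t := fun φ =>
    ((hQ.differentiable one_ne_zero).comp
      (differentiable_id.prodMk (differentiable_const φ))).differentiableAt
  have hbarrier : HasDerivAt (fun s => ε * exp (k * s)) (ε * (exp (k * t) * k)) t :=
    (((hasDerivAt_id t).const_mul k).exp.const_mul ε).congr_deriv (by simp)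
  have hgap := ((hdiff θ).hasDerivAt.sub (hdiff 0).hasDerivAt).sub hbarrier
  have := hgap.nonneg_of_eventually_le_left <| by
    filter_upwards [Ioo_mem_nhdsLT ht] with s hs
    simp only [Pi.sub_apply]
    linarith [hbefore s ⟨hs.1.le, hs.2⟩]
  linarith

theorem deriv_sub_le_of_touch₁
    (heq1 : ∀ t θ, deriv (fun s => Q₁ s θ) t
      + 2 * sin (2 * θ) * deriv (fun φ => Q₁ t φ) θ + 6 * Q₁ t θ = Q₂ t θ)
    (hθ : θ ∈ Icc 0 (π / 2)) (hmax : IsMaxOn (fun φ => Q₁ t φ) (Icc 0 (π / 2)) θ)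
    (h₁ : Q₁ t θ - Q₁ t 0 = E) (h₂ : Q₂ t θ - Q₂ t 0 ≤ E) :
    deriv (fun s => Q₁ s θ) t - deriv (fun s => Q₁ s 0) t ≤ -5 * E := by
  have htransport := sin_two_mul_mul_deriv_eq_zero_of_isMaxOn hθ hmax
  have hθeq := heq1 t θ
  have h0eq := heq1 t 0
  simp only [mul_zero, sin_zero, zero_mul, add_zero] at h0eq
  linarith

theorem deriv_sub_le_of_touch₂
    (heq2 : ∀ t θ, deriv (fun s => Q₂ s θ) t
      + 2 * sin (2 * θ) * deriv (fun φ => Q₂ t φ) θ + 9 * Q₂ t θ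
      = 130 * (cos θ) ^ 2 * (Q₁ t θ - (2 / π) * ∫ φ in (0 : ℝ)..(π / 2), Q₁ t φ))
    (hQ₁ : Continuous fun φ => Q₁ t φ)
    (hθ : θ ∈ Icc 0 (π / 2)) (hmax : IsMaxOn (fun φ => Q₂ t φ) (Icc 0 (π / 2)) θ)
    (h₁ : ∀ φ ∈ Icc 0 (π / 2), Q₁ t φ - Q₁ t 0 ≤ E) (h₂ : Q₂ t θ - Q₂ t 0 = E) :
    deriv (fun s => Q₂ s θ) t - deriv (fun s => Q₂ s 0) t ≤ 121 * E := by
  have htransport := sin_two_mul_mul_deriv_eq_zero_of_isMaxOn hθ hmax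
  have hθeq := heq2 t θ
  have h0eq := heq2 t 0
  simp only [mul_zero, sin_zero, zero_mul, add_zero, cos_zero, one_pow, mul_one] at h0eq
  set I := (2 / π) * ∫ φ in (0 : ℝ)..(π / 2), Q₁ t φ
  have hmean : I ≤ Q₁ t 0 + E := by
    have hint := intervalIntegral.integral_le_mul_of_le (c := Q₁ t 0 + E) (by positivity)
      (hQ₁.intervalIntegrable 0 (π / 2)) fun φ hφ => by linarith [h₁ φ hφ]
    calc I ≤ (2 / π) * ((π / 2 - 0) * (Q₁ t 0 + E)) :=
        mul_le_mul_of_nonneg_left hint (by positivity)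
      _ = Q₁ t 0 + E := by field_simp; ring
  have hcos := cos_sq_le_one θ
  nlinarith [mul_le_mul_of_nonneg_left (h₁ θ hθ) (sq_nonneg (cos θ)),
    mul_le_mul_of_nonneg_left hmean (sub_nonneg.mpr hcos)]

theorem max_sub_barrier_ne_zero
    (hreg1 : ContDiff ℝ 1 (fun p : ℝ × ℝ => Q₁ p.1 p.2))
    (hreg2 : ContDiff ℝ 1 (fun p : ℝ × ℝ => Q₂ p.1 p.2))
    (heq1 : ∀ t θ, deriv (fun s => Q₁ s θ) t
      + 2 * sin (2 * θ) * deriv (fun φ => Q₁ t φ) θ + 6 * Q₁ t θ = Q₂ t θ)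
    (heq2 : ∀ t θ, deriv (fun s => Q₂ s θ) t
      + 2 * sin (2 * θ) * deriv (fun φ => Q₂ t φ) θ + 9 * Q₂ t θ
      = 130 * (cos θ) ^ 2 * (Q₁ t θ - (2 / π) * ∫ φ in (0 : ℝ)..(π / 2), Q₁ t φ))
    (hε : 0 < ε) (ht : 0 < t) (hθ : θ ∈ Icc 0 (π / 2))
    (hbefore : ∀ s ∈ Ico 0 t, ∀ φ ∈ Icc 0 (π / 2),
      max (Q₁ s φ - Q₁ s 0) (Q₂ s φ - Q₂ s 0) - ε * exp (130 * s) < 0)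
    (hnow : ∀ φ ∈ Icc 0 (π / 2),
      max (Q₁ t φ - Q₁ t 0) (Q₂ t φ - Q₂ t 0) - ε * exp (130 * t) ≤ 0) :
    max (Q₁ t θ - Q₁ t 0) (Q₂ t θ - Q₂ t 0) - ε * exp (130 * t) ≠ 0 := by
  intro htouch
  have hE : 0 < ε * exp (130 * t) := by positivity
  have hnow₁ : ∀ φ ∈ Icc 0 (π / 2), Q₁ t φ - Q₁ t 0 ≤ ε * exp (130 * t) := fun φ hφ =>
    (le_max_left _ _).trans (sub_nonpos.mp (hnow φ hφ))
  have hnow₂ : ∀ φ ∈ Icc 0 (π / 2), Q₂ t φ - Q₂ t 0 ≤ ε * exp (130 * t) := fun φ hφ =>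
    (le_max_right _ _).trans (sub_nonpos.mp (hnow φ hφ))
  rcases max_choice (Q₁ t θ - Q₁ t 0) (Q₂ t θ - Q₂ t 0) with hmax | hmax
  · have h₁ : Q₁ t θ - Q₁ t 0 = ε * exp (130 * t) := by linarith
    have hlower := le_deriv_of_first_touch hreg1 ht (fun s hs => (le_max_left _ _).trans_lt
      (sub_neg.mp (hbefore s hs θ hθ))) h₁
    have hupper := deriv_sub_le_of_touch₁ heq1 hθ
      (isMaxOn_iff.mpr fun φ hφ => by linarith [hnow₁ φ hφ]) h₁ (hnow₂ θ hθ)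
    linarith
  · have h₂ : Q₂ t θ - Q₂ t 0 = ε * exp (130 * t) := by linarith
    have hlower := le_deriv_of_first_touch hreg2 ht (fun s hs => (le_max_right _ _).trans_lt
      (sub_neg.mp (hbefore s hs θ hθ))) h₂
    have hupper := deriv_sub_le_of_touch₂ heq2
      (hreg1.continuous.comp (Continuous.prodMk_right t)) hθ
      (isMaxOn_iff.mpr fun φ hφ => by linarith [hnow₂ φ hφ]) hnow₁ h₂
    linarith

end AngularSystem

/-- Preservation of non-positivity for the angular system: if `Q̄ᵢ(0,·) ≤ 0` on `[0,π/2]`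
(where `Q̄ᵢ(t,θ) = Qᵢ(t,θ) − Qᵢ(t,0)`), then `Q̄ᵢ(t,·) ≤ 0` for all `t ≥ 0`. -/
theorem stmt14 (Q₁ Q₂ : ℝ → ℝ → ℝ)
    (hreg1 : ContDiff ℝ 1 (fun p : ℝ × ℝ => Q₁ p.1 p.2))
    (hreg2 : ContDiff ℝ 1 (fun p : ℝ × ℝ => Q₂ p.1 p.2))
    (heq1 : ∀ t θ, deriv (fun s => Q₁ s θ) t
      + 2 * Real.sin (2*θ) * deriv (fun φ => Q₁ t φ) θ + 6 * Q₁ t θ = Q₂ t θ)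
    (heq2 : ∀ t θ, deriv (fun s => Q₂ s θ) t
      + 2 * Real.sin (2*θ) * deriv (fun φ => Q₂ t φ) θ + 9 * Q₂ t θ
      = 130 * (Real.cos θ)^2 * (Q₁ t θ - (2/π) * ∫ φ in (0:ℝ)..(π/2), Q₁ t φ))
    (hinit1 : ∀ θ ∈ Icc (0:ℝ) (π/2), Q₁ 0 θ - Q₁ 0 0 ≤ 0)
    (hinit2 : ∀ θ ∈ Icc (0:ℝ) (π/2), Q₂ 0 θ - Q₂ 0 0 ≤ 0) :
    ∀ t ≥ (0:ℝ), ∀ θ ∈ Icc (0:ℝ) (π/2),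
      Q₁ t θ - Q₁ t 0 ≤ 0 ∧ Q₂ t θ - Q₂ t 0 ≤ 0 := by
  have hc1 := hreg1.continuous
  have hc2 := hreg2.continuous
  have hbarrier : ∀ ε > 0, ∀ t ≥ (0:ℝ), ∀ θ ∈ Icc (0:ℝ) (π/2),
      max (Q₁ t θ - Q₁ t 0) (Q₂ t θ - Q₂ t 0) - ε * exp (130 * t) < 0 := fun ε hε =>
    forall_neg_of_not_first_zero isCompact_Icc (by fun_prop)
      (fun θ hθ => by simpa using max_le (hinit1 θ hθ) (hinit2 θ hθ) |>.trans_lt hε)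
      fun t ht hbefore hnow θ hθ =>
        max_sub_barrier_ne_zero hreg1 hreg2 heq1 heq2 hε ht hθ hbefore hnow
  intro t ht θ hθ
  refine max_le_iff.mp (le_of_forall_pos_lt_add fun δ hδ => ?_)
  have := hbarrier (δ / exp (130 * t)) (by positivity) t ht θ hθ
  rwa [div_mul_cancel₀ _ (exp_pos _).ne', sub_neg, ← zero_add δ] at this
end
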